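/- arXiv:2301.04568 — 14 statements merged into one kernel-verified Lean document; each statement's English description precedes it below -/
import Mathlib

section
/- Let S̃ be an invertible q×q real matrix and set S = S̃⁻¹|Λ⁻|^{1/2}. Then for every W⁺ ∈ ℝ^p and G ∈ ℝ^q, with W⁻ = R W⁺ + S⁻¹G the boundary term satisfies the identity BT(W⁺, W⁻) = [W⁺; G]ᵀ K [W⁺; G] − GᵀG, where K is the (p+q)×(p+q) block matrix with blocks K₁₁ = Λ⁺ − Rᵀ|Λ⁻|R, K₁₂ = −Rᵀ|Λ⁻|^{1/2}S̃, K₂₁ = −S̃ᵀ|Λ⁻|^{1/2}R and K₂₂ = I − S̃ᵀS̃. -/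
open Matrix

/-- With `S = S̃⁻¹|Λ⁻|^{1/2}` (`S̃` invertible) and `W⁻ = R W⁺ + S⁻¹G`,
the boundary term satisfies the identity
`BT(W⁺, W⁻) = [W⁺; G]ᵀ K [W⁺; G] − GᵀG` with the indicated block matrix `K`. -/
theorem strong_inhomogeneous_bc_identity {p q : ℕ}
    (Λp : Matrix (Fin p) (Fin p) ℝ) (Λm : Matrix (Fin q) (Fin q) ℝ)
    (hΛpDiag : Λp.IsDiag) (hΛpNonneg : ∀ i, 0 ≤ Λp i i)
    (hΛmDiag : Λm.IsDiag) (hΛmNeg : ∀ i, Λm i i < 0)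
    (R : Matrix (Fin q) (Fin p) ℝ)
    (Λh : Matrix (Fin q) (Fin q) ℝ)
    (hΛh : Λh = Matrix.diagonal fun i => Real.sqrt (-Λm i i))
    (St : Matrix (Fin q) (Fin q) ℝ) (hSt : IsUnit St.det)
    (S : Matrix (Fin q) (Fin q) ℝ) (hS : S = St⁻¹ * Λh)
    (K : Matrix (Fin p ⊕ Fin q) (Fin p ⊕ Fin q) ℝ)
    (hK : K = Matrix.fromBlocks (Λp - Rᵀ * (-Λm) * R) (-(Rᵀ * Λh * St))
      (-(Stᵀ * Λh * R)) (1 - Stᵀ * St)) :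
    ∀ (Wp : Fin p → ℝ) (G : Fin q → ℝ),
      Wp ⬝ᵥ Λp.mulVec Wp
        + (R.mulVec Wp + S⁻¹.mulVec G) ⬝ᵥ Λm.mulVec (R.mulVec Wp + S⁻¹.mulVec G)
        = (Sum.elim Wp G) ⬝ᵥ K.mulVec (Sum.elim Wp G) - G ⬝ᵥ G := by
  intro Wp G
  have hΛhT : Λhᵀ = Λh := by rw [hΛh, Matrix.diagonal_transpose]
  have hΛhΛh : Λh * Λh = -Λm := by
    rw [hΛh, Matrix.diagonal_mul_diagonal]
    ext i j
    by_cases h : i = j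
    · subst h
      simp [Real.mul_self_sqrt (neg_pos.2 (hΛmNeg i)).le]
    · simp [Matrix.diagonal_apply_ne _ h, hΛmDiag h]
  have hΛhdet : IsUnit Λh.det := by
    rw [hΛh, Matrix.det_diagonal]
    exact isUnit_iff_ne_zero.2 (ne_of_gt (Finset.prod_pos fun i _ =>
      Real.sqrt_pos.2 (by linarith [hΛmNeg i])))
  have hS' : Λh * S⁻¹ = St := by
    rw [hS, Matrix.mul_inv_rev, Matrix.nonsing_inv_nonsing_inv St hSt,
      ← Matrix.mul_assoc, Matrix.mul_nonsing_inv Λh hΛhdet, Matrix.one_mul]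
  set a := Λh.mulVec (R.mulVec Wp) with ha
  set b := St.mulVec G with hb
  have hΛhSinv : Λh.mulVec (S⁻¹.mulVec G) = b := by
    rw [hb, ← hS', ← Matrix.mulVec_mulVec]
  have hsymm : ∀ v w : Fin q → ℝ, v ⬝ᵥ Λh.mulVec w = Λh.mulVec v ⬝ᵥ w := by
    intro v w
    rw [Matrix.dotProduct_mulVec, ← hΛhT, Matrix.vecMul_transpose, hΛhT]
  have hLHS : (R.mulVec Wp + S⁻¹.mulVec G) ⬝ᵥ Λm.mulVec (R.mulVec Wp + S⁻¹.mulVec G)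
      = -((a + b) ⬝ᵥ (a + b)) := by
    have hΛm : Λm = -(Λh * Λh) := by rw [hΛhΛh, neg_neg]
    rw [hΛm, Matrix.neg_mulVec, dotProduct_neg, ← Matrix.mulVec_mulVec,
      hsymm, Matrix.mulVec_add, hΛhSinv]
  rw [hLHS, hK, Matrix.fromBlocks_mulVec, sumElim_dotProduct_sumElim]
  have c2 : Wp ⬝ᵥ (Rᵀ * -Λm * R).mulVec Wp = a ⬝ᵥ a := by
    rw [← hΛhΛh, ← Matrix.mulVec_mulVec, ← Matrix.mulVec_mulVec,
      Matrix.dotProduct_mulVec, Matrix.vecMul_transpose, ← Matrix.mulVec_mulVec,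
      hsymm]
  have c3 : Wp ⬝ᵥ (Rᵀ * Λh * St).mulVec G = a ⬝ᵥ b := by
    rw [← Matrix.mulVec_mulVec, ← Matrix.mulVec_mulVec,
      Matrix.dotProduct_mulVec, Matrix.vecMul_transpose, hsymm]
  have c4 : G ⬝ᵥ (Stᵀ * Λh * R).mulVec Wp = a ⬝ᵥ b := by
    rw [← Matrix.mulVec_mulVec, ← Matrix.mulVec_mulVec,
      Matrix.dotProduct_mulVec, Matrix.vecMul_transpose, ← hb,
      dotProduct_comm]
  have c5 : G ⬝ᵥ (Stᵀ * St).mulVec G = b ⬝ᵥ b := by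
    rw [← Matrix.mulVec_mulVec, Matrix.dotProduct_mulVec, Matrix.vecMul_transpose]
  simp only [Sum.elim_comp_inl, Sum.elim_comp_inr, Matrix.sub_mulVec,
    Matrix.neg_mulVec, Matrix.one_mulVec, dotProduct_add,
    add_dotProduct, dotProduct_sub, dotProduct_neg,
    c2, c3, c4, c5]
  have hba : b ⬝ᵥ a = a ⬝ᵥ b := dotProduct_comm _ _
  simp only [dotProduct_add, add_dotProduct, hba]
  ring
end

section
/- Suppose Λ⁺ − Rᵀ|Λ⁻|R is positive definite. Then there exists δ > 0 such that for every invertible q×q matrix S̃ with operator norm ‖S̃‖ < δ, setting S = S̃⁻¹|Λ⁻|^{1/2}, one has for all W⁺ ∈ ℝ^p and G ∈ ℝ^q that the strongly imposed inhomogeneous boundary condition W⁻ = R W⁺ + S⁻¹G yields the lower bound BT(W⁺, W⁻) ≥ −GᵀG; i.e., the boundary term is bounded from below solely in terms of the external data G. -/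
/-!
With `Λh = |Λ⁻|^{1/2}` we have `Λ⁻ = -Λhᵀ Λh`, and the boundary condition gives
`Λh W⁻ = a + b` with `a = Λh R W⁺` and `b = S̃ G`. Since `aᵀa = W⁺ᵀ Rᵀ|Λ⁻|R W⁺`, the boundary term
equals `W⁺ᵀ (Λ⁺ - Rᵀ|Λ⁻|R) W⁺ - 2 aᵀb - bᵀb`. The first summand is at least `c |W⁺|²` by positive
definiteness; Young's inequality absorbs the cross term into it at the cost of a multiple of
`|b|² ≤ ‖S̃‖² |G|²`, which is at most `|G|²` once `‖S̃‖` is small.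
-/

open Matrix
open scoped Matrix.Norms.L2Operator MatrixOrder

theorem dotProduct_self_nonneg {n R : Type*} [Fintype n] [Ring R] [LinearOrder R]
    [IsStrictOrderedRing R] (x : n → R) : 0 ≤ x ⬝ᵥ x :=
  Finset.sum_nonneg fun i _ => mul_self_nonneg (x i)

theorem two_mul_dotProduct_le {n 𝕜 : Type*} [Fintype n] [Field 𝕜] [LinearOrder 𝕜]
    [IsStrictOrderedRing 𝕜] {t : 𝕜} (ht : 0 < t) (x y : n → 𝕜) :
    2 * (x ⬝ᵥ y) ≤ t * (x ⬝ᵥ x) + t⁻¹ * (y ⬝ᵥ y) := by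
  have key : 0 ≤ t⁻¹ * ((t • x - y) ⬝ᵥ (t • x - y)) :=
    mul_nonneg (inv_nonneg.2 ht.le) (dotProduct_self_nonneg _)
  simp only [sub_dotProduct, dotProduct_sub, smul_dotProduct, dotProduct_smul, smul_eq_mul,
    dotProduct_comm y x] at key
  field_simp at key ⊢
  linarith

theorem dotProduct_mulVec_transpose_mul_self {m n R : Type*} [Fintype m] [Fintype n]
    [CommSemiring R] (A : Matrix m n R) (x : n → R) :
    x ⬝ᵥ (Aᵀ * A) *ᵥ x = A *ᵥ x ⬝ᵥ A *ᵥ x := by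
  rw [← mulVec_mulVec, dotProduct_mulVec, vecMul_transpose]

theorem EuclideanSpace.dotProduct_self_eq_norm_sq {n : Type*} [Fintype n] (x : n → ℝ) :
    x ⬝ᵥ x = ‖WithLp.toLp 2 x‖ ^ 2 := by
  rw [EuclideanSpace.norm_sq_eq]
  simp [dotProduct, sq]

def boundaryTerm {n m R : Type*} [Fintype n] [Fintype m] [NonUnitalNonAssocSemiring R]
    (Λp : Matrix n n R) (Λm : Matrix m m R) (Wp : n → R) (Wm : m → R) : R :=
  Wp ⬝ᵥ Λp *ᵥ Wp + Wm ⬝ᵥ Λm *ᵥ Wm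

theorem boundaryTerm_neg_transpose_mul_self_mulVec_add {n m R : Type*} [Fintype n] [Fintype m]
    [CommRing R] (Λp : Matrix n n R) (D : Matrix m m R) (B : Matrix m n R) (w : n → R)
    (v : m → R) :
    boundaryTerm Λp (-(Dᵀ * D)) w (B *ᵥ w + v)
      = w ⬝ᵥ (Λp - Bᵀ * (Dᵀ * D) * B) *ᵥ w - 2 * ((D * B) *ᵥ w ⬝ᵥ D *ᵥ v)
        - D *ᵥ v ⬝ᵥ D *ᵥ v := by
  have hB : Bᵀ * (Dᵀ * D) * B = (D * B)ᵀ * (D * B) := by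
    simp only [transpose_mul, Matrix.mul_assoc]
  rw [boundaryTerm, neg_mulVec, dotProduct_neg, dotProduct_mulVec_transpose_mul_self, sub_mulVec,
    dotProduct_sub, hB, dotProduct_mulVec_transpose_mul_self, mulVec_add, ← mulVec_mulVec]
  simp only [add_dotProduct, dotProduct_add, dotProduct_comm (D *ᵥ v)]
  ring

namespace Matrix

theorem IsDiag.transpose_mul_self_diagonal_sqrt_neg {n : Type*} [Fintype n] [DecidableEq n]
    {Λ : Matrix n n ℝ} (hΛ : Λ.IsDiag) (hΛnonpos : ∀ i, Λ i i ≤ 0) :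
    (diagonal fun i => √(-Λ i i))ᵀ * diagonal (fun i => √(-Λ i i)) = -Λ := by
  conv_rhs => rw [← hΛ.diagonal_diag, diagonal_neg]
  rw [diagonal_transpose, diagonal_mul_diagonal]
  congr 1
  funext i
  exact Real.mul_self_sqrt (neg_nonneg.2 (hΛnonpos i))

variable {m n l : Type*} [Fintype m] [Fintype n] [DecidableEq n] [Fintype l] [DecidableEq l]

theorem dotProduct_self_mulVec_le_l2_opNorm_sq (A : Matrix m n ℝ) (x : n → ℝ) :
    A *ᵥ x ⬝ᵥ A *ᵥ x ≤ ‖A‖ ^ 2 * (x ⬝ᵥ x) := by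
  rw [EuclideanSpace.dotProduct_self_eq_norm_sq, EuclideanSpace.dotProduct_self_eq_norm_sq,
    ← mul_pow]
  gcongr
  exact A.l2_opNorm_mulVec (WithLp.toLp 2 x)

theorem PosDef.exists_pos_mul_dotProduct_self_le {M : Matrix n n ℝ} (hM : M.PosDef) :
    ∃ c > 0, ∀ x, c * (x ⬝ᵥ x) ≤ x ⬝ᵥ M *ᵥ x := by
  obtain ⟨B, hB, rfl⟩ :=
    CStarAlgebra.isStrictlyPositive_iff_eq_star_mul_self.mp hM.isStrictlyPositive
  refine ⟨(‖B⁻¹‖ ^ 2 + 1)⁻¹, by positivity, fun x => ?_⟩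
  rw [inv_mul_le_iff₀ (by positivity), star_eq_conjTranspose,
    conjTranspose_eq_transpose_of_trivial, dotProduct_mulVec_transpose_mul_self]
  have hx : B⁻¹ *ᵥ (B *ᵥ x) = x := by
    rw [mulVec_mulVec, nonsing_inv_mul _ ((isUnit_iff_isUnit_det B).mp hB), one_mulVec]
  calc x ⬝ᵥ x ≤ ‖B⁻¹‖ ^ 2 * (B *ᵥ x ⬝ᵥ B *ᵥ x) := by
        simpa only [hx] using B⁻¹.dotProduct_self_mulVec_le_l2_opNorm_sq (B *ᵥ x)
    _ ≤ (‖B⁻¹‖ ^ 2 + 1) * (B *ᵥ x ⬝ᵥ B *ᵥ x) := by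
        gcongr
        · exact dotProduct_self_nonneg _
        · linarith

theorem PosDef.exists_forall_l2_opNorm_lt_neg_dotProduct_self_le {M : Matrix n n ℝ}
    (hM : M.PosDef) (A : Matrix m n ℝ) :
    ∃ δ > 0, ∀ T : Matrix m l ℝ, ‖T‖ < δ → ∀ w g,
      -(g ⬝ᵥ g) ≤ w ⬝ᵥ M *ᵥ w - 2 * (A *ᵥ w ⬝ᵥ T *ᵥ g) - T *ᵥ g ⬝ᵥ T *ᵥ g := by
  obtain ⟨c, hc, hcoer⟩ := hM.exists_pos_mul_dotProduct_self_le
  -- weight for Young's inequality on the cross term, small enough that `t ‖A‖² ≤ c`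
  set t := c / (‖A‖ ^ 2 + 1) with ht
  have htpos : 0 < t := by positivity
  refine ⟨√(t / (1 + t)), by positivity, fun T hT w g => ?_⟩
  have hAw : t * (A *ᵥ w ⬝ᵥ A *ᵥ w) ≤ c * (w ⬝ᵥ w) := calc
    t * (A *ᵥ w ⬝ᵥ A *ᵥ w) ≤ t * (‖A‖ ^ 2 * (w ⬝ᵥ w)) := by
      gcongr; exact A.dotProduct_self_mulVec_le_l2_opNorm_sq w
    _ ≤ c * (w ⬝ᵥ w) := by
      rw [← mul_assoc]
      gcongr
      · exact dotProduct_self_nonneg w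
      · rw [ht, div_mul_eq_mul_div, div_le_iff₀ (by positivity)]
        nlinarith
  have hTg : (1 + t⁻¹) * (T *ᵥ g ⬝ᵥ T *ᵥ g) ≤ g ⬝ᵥ g := calc
    (1 + t⁻¹) * (T *ᵥ g ⬝ᵥ T *ᵥ g) ≤ (1 + t⁻¹) * (‖T‖ ^ 2 * (g ⬝ᵥ g)) := by
      gcongr; exact T.dotProduct_self_mulVec_le_l2_opNorm_sq g
    _ ≤ (1 + t⁻¹) * (t / (1 + t) * (g ⬝ᵥ g)) := by
      gcongr
      · exact dotProduct_self_nonneg g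
      · calc ‖T‖ ^ 2 ≤ √(t / (1 + t)) ^ 2 := by gcongr
          _ = t / (1 + t) := Real.sq_sqrt (by positivity)
    _ = g ⬝ᵥ g := by field_simp; ring
  linarith [hcoer w, two_mul_dotProduct_le htpos (A *ᵥ w) (T *ᵥ g)]

end Matrix

theorem strong_inhomogeneous_bc_bound_general {p q : ℕ}
    (Λp : Matrix (Fin p) (Fin p) ℝ) (Λm : Matrix (Fin q) (Fin q) ℝ)
    (hΛmDiag : Λm.IsDiag) (hΛmNeg : ∀ i, Λm i i < 0)
    (R : Matrix (Fin q) (Fin p) ℝ)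
    (Λh : Matrix (Fin q) (Fin q) ℝ)
    (hΛh : Λh = Matrix.diagonal fun i => Real.sqrt (-Λm i i))
    (hPD : (Λp - Rᵀ * (-Λm) * R).PosDef) :
    ∃ δ > (0 : ℝ), ∀ St : Matrix (Fin q) (Fin q) ℝ, IsUnit St.det → ‖St‖ < δ →
      ∀ (S : Matrix (Fin q) (Fin q) ℝ), S = St⁻¹ * Λh →
        ∀ (Wp : Fin p → ℝ) (G : Fin q → ℝ),
          Wp ⬝ᵥ Λp.mulVec Wp
            + (R.mulVec Wp + S⁻¹.mulVec G) ⬝ᵥ Λm.mulVec (R.mulVec Wp + S⁻¹.mulVec G)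
            ≥ -(G ⬝ᵥ G) := by
  have hΛm : Λhᵀ * Λh = -Λm :=
    hΛh ▸ hΛmDiag.transpose_mul_self_diagonal_sqrt_neg fun i => (hΛmNeg i).le
  have hΛhdet : IsUnit Λh.det := by
    rw [hΛh, det_diagonal]
    exact (Finset.prod_pos fun i _ => Real.sqrt_pos.2 (neg_pos.2 (hΛmNeg i))).ne'.isUnit
  rw [← hΛm] at hPD
  obtain ⟨δ, hδ, hbound⟩ := hPD.exists_forall_l2_opNorm_lt_neg_dotProduct_self_le (l := Fin q) (Λh * R)
  refine ⟨δ, hδ, fun St hSt hStδ S hS Wp G => ?_⟩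
  have hΛhS : Λh * S⁻¹ = St := by
    rw [hS, Matrix.mul_inv_rev, nonsing_inv_nonsing_inv _ hSt, ← Matrix.mul_assoc,
      mul_nonsing_inv _ hΛhdet, Matrix.one_mul]
  rw [ge_iff_le, ← neg_neg Λm, ← hΛm]
  change _ ≤ boundaryTerm Λp (-(Λhᵀ * Λh)) Wp (R *ᵥ Wp + S⁻¹ *ᵥ G)
  rw [boundaryTerm_neg_transpose_mul_self_mulVec_add, mulVec_mulVec, hΛhS]
  exact hbound St hStδ Wp G

/-- If `Λ⁺ − Rᵀ|Λ⁻|R` is positive definite, then there exists `δ > 0` such that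
for every invertible `S̃` with operator norm `‖S̃‖ < δ`, setting `S = S̃⁻¹|Λ⁻|^{1/2}`,
the strongly imposed inhomogeneous boundary condition `W⁻ = R W⁺ + S⁻¹G` yields
`BT(W⁺, W⁻) ≥ −GᵀG`. -/
theorem strong_inhomogeneous_bc_bound {p q : ℕ}
    (Λp : Matrix (Fin p) (Fin p) ℝ) (Λm : Matrix (Fin q) (Fin q) ℝ)
    (hΛpDiag : Λp.IsDiag) (hΛpNonneg : ∀ i, 0 ≤ Λp i i)
    (hΛmDiag : Λm.IsDiag) (hΛmNeg : ∀ i, Λm i i < 0)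
    (R : Matrix (Fin q) (Fin p) ℝ)
    (Λh : Matrix (Fin q) (Fin q) ℝ)
    (hΛh : Λh = Matrix.diagonal fun i => Real.sqrt (-Λm i i))
    (hPD : (Λp - Rᵀ * (-Λm) * R).PosDef) :
    ∃ δ > (0 : ℝ), ∀ St : Matrix (Fin q) (Fin q) ℝ, IsUnit St.det → ‖St‖ < δ →
      ∀ (S : Matrix (Fin q) (Fin q) ℝ), S = St⁻¹ * Λh →
        ∀ (Wp : Fin p → ℝ) (G : Fin q → ℝ),
          Wp ⬝ᵥ Λp.mulVec Wp
            + (R.mulVec Wp + S⁻¹.mulVec G) ⬝ᵥ Λm.mulVec (R.mulVec Wp + S⁻¹.mulVec G)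
            ≥ -(G ⬝ᵥ G) :=
  strong_inhomogeneous_bc_bound_general Λp Λm hΛmDiag hΛmNeg R Λh hΛh hPD
end

section
/- With the penalty matrix Σ = |Λ⁻|, for all W⁺ ∈ ℝ^p and W⁻ ∈ ℝ^q the weakly penalized boundary term satisfies the identity BT(W⁺, W⁻) + 2(W⁻)ᵀΣ(W⁻ − R W⁺) = (W⁺)ᵀ(Λ⁺ − Rᵀ|Λ⁻|R)W⁺ + (W⁻ − R W⁺)ᵀ|Λ⁻|(W⁻ − R W⁺). -/
open Matrix

/-- With penalty matrix `Σ = |Λ⁻|` (here named `Pen`), the weakly penalized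
boundary term satisfies
`BT(W⁺, W⁻) + 2(W⁻)ᵀΣ(W⁻ − R W⁺)
  = (W⁺)ᵀ(Λ⁺ − Rᵀ|Λ⁻|R)W⁺ + (W⁻ − R W⁺)ᵀ|Λ⁻|(W⁻ − R W⁺)`. -/
theorem weak_homogeneous_bc_identity {p q : ℕ}
    (Λp : Matrix (Fin p) (Fin p) ℝ) (Λm : Matrix (Fin q) (Fin q) ℝ)
    (hΛpDiag : Λp.IsDiag) (hΛpNonneg : ∀ i, 0 ≤ Λp i i)
    (hΛmDiag : Λm.IsDiag) (hΛmNonpos : ∀ i, Λm i i ≤ 0)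
    (R : Matrix (Fin q) (Fin p) ℝ)
    (Pen : Matrix (Fin q) (Fin q) ℝ) (hPen : Pen = -Λm) :
    ∀ (Wp : Fin p → ℝ) (Wm : Fin q → ℝ),
      Wp ⬝ᵥ Λp.mulVec Wp + Wm ⬝ᵥ Λm.mulVec Wm
        + 2 * (Wm ⬝ᵥ Pen.mulVec (Wm - R.mulVec Wp))
        = Wp ⬝ᵥ (Λp - Rᵀ * (-Λm) * R).mulVec Wp
          + (Wm - R.mulVec Wp) ⬝ᵥ (-Λm).mulVec (Wm - R.mulVec Wp) := by
  intro Wp Wm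
  subst hPen
  have hsymm : Λmᵀ = Λm := hΛmDiag.isSymm
  set u := R.mulVec Wp with hu
  have key : Wm ⬝ᵥ Λm.mulVec u = u ⬝ᵥ Λm.mulVec Wm := by
    rw [Matrix.dotProduct_mulVec, ← Matrix.mulVec_transpose, hsymm, dotProduct_comm]
  have hRt : ∀ x : Fin q → ℝ, Wp ⬝ᵥ Rᵀ.mulVec x = u ⬝ᵥ x := by
    intro x
    rw [Matrix.dotProduct_mulVec, Matrix.vecMul_transpose, hu]
  have hmul : (Λp - Rᵀ * (-Λm) * R).mulVec Wp
      = Λp.mulVec Wp - Rᵀ.mulVec ((-Λm).mulVec u) := by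
    rw [Matrix.sub_mulVec, ← Matrix.mulVec_mulVec, ← Matrix.mulVec_mulVec, ← hu]
  rw [hmul]
  simp only [Matrix.mulVec_sub, Matrix.neg_mulVec, dotProduct_neg, neg_dotProduct,
    dotProduct_sub, sub_dotProduct, hRt]
  linarith [key]
end

section
/- Suppose Λ⁺ − Rᵀ|Λ⁻|R is positive semidefinite and take the penalty matrix Σ = |Λ⁻|. Then for all W⁺ ∈ ℝ^p and W⁻ ∈ ℝ^q, the boundary term with the weakly imposed homogeneous boundary condition is nonnegative: BT(W⁺, W⁻) + 2(W⁻)ᵀΣ(W⁻ − R W⁺) ≥ 0. -/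
open Matrix

/-- If `Λ⁺ − Rᵀ|Λ⁻|R` is positive semidefinite and `Σ = |Λ⁻|` (here named `Pen`),
then the boundary term with the weakly imposed homogeneous boundary condition is nonnegative:
`BT(W⁺, W⁻) + 2(W⁻)ᵀΣ(W⁻ − R W⁺) ≥ 0`. -/
theorem weak_homogeneous_bc_nonneg {p q : ℕ}
    (Λp : Matrix (Fin p) (Fin p) ℝ) (Λm : Matrix (Fin q) (Fin q) ℝ)
    (hΛpDiag : Λp.IsDiag) (hΛpNonneg : ∀ i, 0 ≤ Λp i i)
    (hΛmDiag : Λm.IsDiag) (hΛmNonpos : ∀ i, Λm i i ≤ 0)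
    (R : Matrix (Fin q) (Fin p) ℝ)
    (hPSD : (Λp - Rᵀ * (-Λm) * R).PosSemidef)
    (Pen : Matrix (Fin q) (Fin q) ℝ) (hPen : Pen = -Λm) :
    ∀ (Wp : Fin p → ℝ) (Wm : Fin q → ℝ),
      0 ≤ Wp ⬝ᵥ Λp.mulVec Wp + Wm ⬝ᵥ Λm.mulVec Wm
        + 2 * (Wm ⬝ᵥ Pen.mulVec (Wm - R.mulVec Wp)) := by
  intro Wp Wm
  subst hPen
  set A := -Λm with hA
  have hAdiag : ∀ i j : Fin q, i ≠ j → A i j = 0 := by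
    intro i j hij
    simp [hA, hΛmDiag hij]
  have hAs : Aᵀ = A := by
    ext i j
    by_cases h : i = j
    · subst h; rfl
    · rw [transpose_apply, hAdiag j i (Ne.symm h), hAdiag i j h]
  have hmv : ∀ v : Fin q → ℝ, ∀ i, A.mulVec v i = A i i * v i := by
    intro v i
    rw [mulVec, dotProduct, Finset.sum_eq_single i]
    · intro j _ hj; rw [hAdiag i j (Ne.symm hj), zero_mul]
    · intro h; exact absurd (Finset.mem_univ i) h
  set u := Wm - R.mulVec Wp with hu
  have h1 : 0 ≤ Wp ⬝ᵥ (Λp - Rᵀ * A * R).mulVec Wp := by simpa using hPSD.dotProduct_mulVec_nonneg Wp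
  have h2 : 0 ≤ u ⬝ᵥ A.mulVec u := by
    rw [dotProduct]
    apply Finset.sum_nonneg
    intro i _
    rw [hmv]
    have hAi : 0 ≤ A i i := by simp [hA]; exact hΛmNonpos i
    calc (0:ℝ) ≤ A i i * (u i * u i) := mul_nonneg hAi (mul_self_nonneg _)
      _ = u i * (A i i * u i) := by ring
  -- symmetry of A in dot products
  have hsym : ∀ v w : Fin q → ℝ, v ⬝ᵥ A.mulVec w = w ⬝ᵥ A.mulVec v := by
    intro v w
    rw [dotProduct_mulVec, ← mulVec_transpose, hAs, dotProduct_comm]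
  have key : Wp ⬝ᵥ Λp.mulVec Wp + Wm ⬝ᵥ Λm.mulVec Wm
        + 2 * (Wm ⬝ᵥ A.mulVec (Wm - R.mulVec Wp))
      = Wp ⬝ᵥ (Λp - Rᵀ * A * R).mulVec Wp + u ⬝ᵥ A.mulVec u := by
    have hWmA : Wm ⬝ᵥ Λm.mulVec Wm = -(Wm ⬝ᵥ A.mulVec Wm) := by
      rw [hA, neg_mulVec, dotProduct_neg, neg_neg]
    have hRAR : Wp ⬝ᵥ (Rᵀ * A * R).mulVec Wp
        = (R.mulVec Wp) ⬝ᵥ A.mulVec (R.mulVec Wp) := by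
      rw [← mulVec_mulVec, ← mulVec_mulVec, dotProduct_mulVec, vecMul_transpose]
    rw [hu, hWmA, sub_mulVec, dotProduct_sub, hRAR, mulVec_sub, dotProduct_sub,
      sub_dotProduct, dotProduct_sub, dotProduct_sub, hsym (R.mulVec Wp) Wm]
    ring
  linarith [h1, h2, key.ge, key.le]
end

section
/- Let S̃ be an invertible q×q real matrix, set S = S̃⁻¹|Λ⁻|^{1/2}, and take Σ = |Λ⁻|. Then for all W⁺ ∈ ℝ^p, W⁻ ∈ ℝ^q and G ∈ ℝ^q, the weakly penalized inhomogeneous boundary term satisfies the identity BT(W⁺, W⁻) + 2(W⁻)ᵀΣ(W⁻ − R W⁺ − S⁻¹G) = (W⁻ − R W⁺ − S⁻¹G)ᵀ|Λ⁻|(W⁻ − R W⁺ − S⁻¹G) + [W⁺; G]ᵀ K [W⁺; G] − GᵀG, where K is the (p+q)×(p+q) block matrix with blocks K₁₁ = Λ⁺ − Rᵀ|Λ⁻|R, K₁₂ = −Rᵀ|Λ⁻|^{1/2}S̃, K₂₁ = −S̃ᵀ|Λ⁻|^{1/2}R and K₂₂ = I − S̃ᵀS̃. -/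
open Matrix

/-- With `S = S̃⁻¹|Λ⁻|^{1/2}` (`S̃` invertible) and `Σ = |Λ⁻|` (here named `Pen`),
the weakly penalized inhomogeneous boundary term satisfies the identity
`BT(W⁺, W⁻) + 2(W⁻)ᵀΣ(W⁻ − R W⁺ − S⁻¹G)
  = (W⁻ − R W⁺ − S⁻¹G)ᵀ|Λ⁻|(W⁻ − R W⁺ − S⁻¹G) + [W⁺; G]ᵀ K [W⁺; G] − GᵀG`
with the indicated block matrix `K`. -/
theorem weak_inhomogeneous_bc_identity {p q : ℕ}
    (Λp : Matrix (Fin p) (Fin p) ℝ) (Λm : Matrix (Fin q) (Fin q) ℝ)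
    (hΛpDiag : Λp.IsDiag) (hΛpNonneg : ∀ i, 0 ≤ Λp i i)
    (hΛmDiag : Λm.IsDiag) (hΛmNeg : ∀ i, Λm i i < 0)
    (R : Matrix (Fin q) (Fin p) ℝ)
    (Λh : Matrix (Fin q) (Fin q) ℝ)
    (hΛh : Λh = Matrix.diagonal fun i => Real.sqrt (-Λm i i))
    (St : Matrix (Fin q) (Fin q) ℝ) (hSt : IsUnit St.det)
    (S : Matrix (Fin q) (Fin q) ℝ) (hS : S = St⁻¹ * Λh)
    (Pen : Matrix (Fin q) (Fin q) ℝ) (hPen : Pen = -Λm)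
    (K : Matrix (Fin p ⊕ Fin q) (Fin p ⊕ Fin q) ℝ)
    (hK : K = Matrix.fromBlocks (Λp - Rᵀ * (-Λm) * R) (-(Rᵀ * Λh * St))
      (-(Stᵀ * Λh * R)) (1 - Stᵀ * St)) :
    ∀ (Wp : Fin p → ℝ) (Wm : Fin q → ℝ) (G : Fin q → ℝ),
      Wp ⬝ᵥ Λp.mulVec Wp + Wm ⬝ᵥ Λm.mulVec Wm
        + 2 * (Wm ⬝ᵥ Pen.mulVec (Wm - R.mulVec Wp - S⁻¹.mulVec G))
        = (Wm - R.mulVec Wp - S⁻¹.mulVec G) ⬝ᵥ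
            (-Λm).mulVec (Wm - R.mulVec Wp - S⁻¹.mulVec G)
          + (Sum.elim Wp G) ⬝ᵥ K.mulVec (Sum.elim Wp G) - G ⬝ᵥ G := by
  have hΛhT : Λhᵀ = Λh := by rw [hΛh, Matrix.diagonal_transpose]
  have hΛmT : Λmᵀ = Λm := by
    ext i j
    by_cases h : i = j
    · subst h; rfl
    · rw [Matrix.transpose_apply, hΛmDiag h, hΛmDiag (Ne.symm h)]
  have hBsq : Λh * Λh = -Λm := by
    rw [hΛh, Matrix.diagonal_mul_diagonal]
    ext i j
    by_cases h : i = j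
    · subst h
      simp [Matrix.diagonal_apply_eq, Real.mul_self_sqrt (le_of_lt (neg_pos.mpr (hΛmNeg i)))]
    · simp [Matrix.diagonal_apply_ne _ h, hΛmDiag h]
  have hBdet : IsUnit Λh.det := by
    rw [hΛh, Matrix.det_diagonal]
    refine isUnit_iff_ne_zero.mpr (ne_of_gt (Finset.prod_pos fun i _ => ?_))
    exact Real.sqrt_pos.mpr (neg_pos.mpr (hΛmNeg i))
  have hSinv : S⁻¹ = Λh⁻¹ * St := by
    rw [hS, Matrix.mul_inv_rev, Matrix.nonsing_inv_nonsing_inv _ hSt]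
  have hASinv : (-Λm) * S⁻¹ = Λh * St := by
    rw [hSinv, ← hBsq, Matrix.mul_assoc, ← Matrix.mul_assoc Λh Λh⁻¹,
      Matrix.mul_nonsing_inv _ hBdet, Matrix.one_mul]
  intro Wp Wm G
  subst hPen hK
  set u := R.mulVec Wp with hu
  set w := S⁻¹.mulVec G with hw
  set g := St.mulVec G with hg
  have swap : ∀ {m n : ℕ} (M : Matrix (Fin m) (Fin n) ℝ) (x : Fin n → ℝ) (y : Fin m → ℝ),
      x ⬝ᵥ Mᵀ.mulVec y = M.mulVec x ⬝ᵥ y := fun M x y => by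
    rw [Matrix.dotProduct_mulVec, Matrix.vecMul_transpose]
  have hAw : Λm.mulVec w = -(Λh.mulVec g) := by
    have : (-Λm).mulVec w = (Λh * St).mulVec G := by
      rw [hw, Matrix.mulVec_mulVec, hASinv]
    rw [Matrix.neg_mulVec] at this
    rw [← neg_neg (Λm.mulVec w), this, ← Matrix.mulVec_mulVec]
  have hAsym : ∀ x y : Fin q → ℝ, x ⬝ᵥ Λm.mulVec y = y ⬝ᵥ Λm.mulVec x := by
    intro x y
    rw [← hΛmT, swap, dotProduct_comm, hΛmT]
  have hwAw : w ⬝ᵥ Λm.mulVec w = -(g ⬝ᵥ g) := by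
    rw [hAw, dotProduct_neg, hw, hSinv, ← Matrix.mulVec_mulVec, ← hΛhT, swap,
      Matrix.mulVec_mulVec, hΛhT, Matrix.mul_nonsing_inv _ hBdet, Matrix.one_mulVec]
  have e1 : Wp ⬝ᵥ Rᵀ.mulVec (Λm.mulVec u) = u ⬝ᵥ Λm.mulVec u := by rw [swap]
  have e2 : Wp ⬝ᵥ Rᵀ.mulVec (Λh.mulVec g) = u ⬝ᵥ Λh.mulVec g := by rw [swap]
  have e3 : G ⬝ᵥ Stᵀ.mulVec (Λh.mulVec u) = u ⬝ᵥ Λh.mulVec g := by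
    rw [swap, ← hg]
    conv_lhs => rw [← hΛhT]
    rw [swap, dotProduct_comm]
  have e4 : G ⬝ᵥ Stᵀ.mulVec g = g ⬝ᵥ g := by rw [swap]
  have f1 : Wm ⬝ᵥ Λm.mulVec w = -(Wm ⬝ᵥ Λh.mulVec g) := by rw [hAw, dotProduct_neg]
  have f2 : u ⬝ᵥ Λm.mulVec w = -(u ⬝ᵥ Λh.mulVec g) := by rw [hAw, dotProduct_neg]
  have f3 : w ⬝ᵥ Λm.mulVec Wm = -(Wm ⬝ᵥ Λh.mulVec g) := by rw [hAsym, f1]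
  have f4 : w ⬝ᵥ Λm.mulVec u = -(u ⬝ᵥ Λh.mulVec g) := by rw [hAsym, f2]
  have f5 : u ⬝ᵥ Λm.mulVec Wm = Wm ⬝ᵥ Λm.mulVec u := hAsym u Wm
  rw [Matrix.fromBlocks_mulVec, sumElim_dotProduct_sumElim]
  simp only [Sum.elim_comp_inl, Sum.elim_comp_inr, Matrix.sub_mulVec, Matrix.add_mulVec,
    Matrix.neg_mulVec, Matrix.one_mulVec, Matrix.mulVec_sub, Matrix.mulVec_add,
    Matrix.mulVec_neg, ← Matrix.mulVec_mulVec, dotProduct_sub, dotProduct_add,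
    sub_dotProduct, add_dotProduct, dotProduct_neg, neg_dotProduct]
  linarith [e1, e2, e3, e4, f1, f2, f3, f4, f5, hwAw]
end

section
/- Suppose Λ⁺ − Rᵀ|Λ⁻|R is positive definite and take Σ = |Λ⁻|. Then there exists δ > 0 such that for every invertible q×q matrix S̃ with operator norm ‖S̃‖ < δ, setting S = S̃⁻¹|Λ⁻|^{1/2}, one has for all W⁺ ∈ ℝ^p, W⁻ ∈ ℝ^q and G ∈ ℝ^q the lower bound BT(W⁺, W⁻) + 2(W⁻)ᵀΣ(W⁻ − R W⁺ − S⁻¹G) ≥ −GᵀG; i.e., the weakly penalized boundary term is bounded from below solely in terms of the external data G. -/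
open Matrix
open scoped Matrix.Norms.L2Operator

/-!
Write `Σ = -Λ⁻ = HᵀH` with `H = |Λ⁻|^{1/2}`, and put `a = H W⁻`, `b = H R W⁺`, `v = S̃ G`;
then `Σ S⁻¹ G = Hᵀ v`. With `A = Λ⁺ - RᵀΣR` the penalized boundary term equals
`(W⁺ᵀ A W⁺ - 2 W⁺ᵀ Rᵀ Hᵀ v) + (|a - b|² - 2 (a - b)ᵀ v)`. Completing both squares bounds it
below by `-(|v|² + wᵀ A⁻¹ w)` with `w = Rᵀ Hᵀ v`, and this is at least
`-(1 + ‖A⁻¹‖ ‖Rᵀ Hᵀ‖²) ‖S̃‖² |G|²`, so `δ = (1 + ‖A⁻¹‖ ‖Rᵀ Hᵀ‖²)^{-1/2}` works.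
-/

namespace Matrix

variable {l m n : Type*} [Fintype l] [Fintype m] [Fintype n]

theorem dotProduct_transpose_mul_mulVec (H : Matrix m n ℝ) (x y : n → ℝ) :
    x ⬝ᵥ (Hᵀ * H) *ᵥ y = H *ᵥ x ⬝ᵥ H *ᵥ y := by
  rw [← mulVec_mulVec, dotProduct_mulVec, vecMul_transpose]

theorem PosDef.two_mul_dotProduct_le [DecidableEq n] {A : Matrix n n ℝ} (hA : A.PosDef)
    (x w : n → ℝ) : 2 * (x ⬝ᵥ w) ≤ x ⬝ᵥ A *ᵥ x + w ⬝ᵥ A⁻¹ *ᵥ w := by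
  set y := A⁻¹ *ᵥ w
  have hAy : A *ᵥ y = w := by
    rw [mulVec_mulVec, mul_nonsing_inv _ ((isUnit_iff_isUnit_det A).1 hA.isUnit), one_mulVec]
  have hyA : y ⬝ᵥ A *ᵥ x = w ⬝ᵥ x := by
    have hAt : Aᵀ = A := by simpa using hA.isHermitian.eq
    rw [dotProduct_mulVec, ← mulVec_transpose, hAt, hAy]
  have hnonneg := hA.posSemidef.dotProduct_mulVec_nonneg (x - y)
  simp only [star_trivial, mulVec_sub, hAy, dotProduct_sub, sub_dotProduct, hyA] at hnonneg
  linarith [dotProduct_comm x w, dotProduct_comm y w]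

theorem two_mul_dotProduct_le_add (u v : n → ℝ) : 2 * (u ⬝ᵥ v) ≤ u ⬝ᵥ u + v ⬝ᵥ v := by
  classical
  simpa using PosDef.one.two_mul_dotProduct_le u v

theorem dotProduct_mulVec_le_l2_opNorm_mul [DecidableEq n] (A : Matrix n n ℝ) (x : n → ℝ) :
    x ⬝ᵥ A *ᵥ x ≤ ‖A‖ * (x ⬝ᵥ x) := by
  have hinner (y z : n → ℝ) : y ⬝ᵥ z = inner ℝ (WithLp.toLp 2 y) (WithLp.toLp 2 z) := by
    simp [EuclideanSpace.inner_toLp_toLp, dotProduct_comm]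
  have hAx : ‖WithLp.toLp 2 (A *ᵥ x)‖ ≤ ‖A‖ * ‖WithLp.toLp 2 x‖ := by
    simpa using A.l2_opNorm_mulVec (WithLp.toLp 2 x)
  calc x ⬝ᵥ A *ᵥ x ≤ ‖WithLp.toLp 2 x‖ * ‖WithLp.toLp 2 (A *ᵥ x)‖ :=
        hinner x _ ▸ real_inner_le_norm _ _
    _ ≤ ‖WithLp.toLp 2 x‖ * (‖A‖ * ‖WithLp.toLp 2 x‖) := by gcongr
    _ = ‖A‖ * (x ⬝ᵥ x) := by rw [hinner, real_inner_self_eq_norm_sq]; ring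

theorem mulVec_dotProduct_mulVec_le [DecidableEq n] (A : Matrix m n ℝ) (x : n → ℝ) :
    A *ᵥ x ⬝ᵥ A *ᵥ x ≤ ‖A‖ ^ 2 * (x ⬝ᵥ x) := by
  rw [← dotProduct_transpose_mul_mulVec, sq, ← l2_opNorm_conjTranspose_mul_self,
    conjTranspose_eq_transpose_of_trivial]
  exact dotProduct_mulVec_le_l2_opNorm_mul _ x

theorem mulVec_dotProduct_mulVec_mulVec_le [DecidableEq m] [DecidableEq n] (B : Matrix m m ℝ)
    (M : Matrix m n ℝ) (v : n → ℝ) : M *ᵥ v ⬝ᵥ B *ᵥ (M *ᵥ v) ≤ ‖B‖ * ‖M‖ ^ 2 * (v ⬝ᵥ v) :=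
  calc M *ᵥ v ⬝ᵥ B *ᵥ (M *ᵥ v) ≤ ‖B‖ * (M *ᵥ v ⬝ᵥ M *ᵥ v) :=
        dotProduct_mulVec_le_l2_opNorm_mul B _
    _ ≤ ‖B‖ * (‖M‖ ^ 2 * (v ⬝ᵥ v)) := by gcongr; exact mulVec_dotProduct_mulVec_le M v
    _ = ‖B‖ * ‖M‖ ^ 2 * (v ⬝ᵥ v) := by ring

theorem IsDiag.diagonal_sqrt_mul_self [DecidableEq n] {D : Matrix n n ℝ} (hD : D.IsDiag)
    (h : ∀ i, 0 ≤ D i i) : diagonal (fun i => √(D i i)) * diagonal (fun i => √(D i i)) = D := by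
  conv_rhs => rw [← hD.diagonal_diag]
  rw [diagonal_mul_diagonal]
  exact congrArg diagonal (funext fun i => Real.mul_self_sqrt (h i))

theorem isUnit_diagonal_sqrt [DecidableEq n] {d : n → ℝ} (h : ∀ i, 0 < d i) :
    IsUnit (diagonal fun i => √(d i)) :=
  isUnit_diagonal.2 (Pi.isUnit_iff.2 fun i => (Real.sqrt_pos.2 (h i)).ne'.isUnit)

end Matrix

theorem sq_mul_le_one_of_lt_inv_sqrt {x K : ℝ} (hK : 0 < K) (hx₀ : 0 ≤ x) (hx : x < (√K)⁻¹) :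
    x ^ 2 * K ≤ 1 := by
  have h := pow_lt_pow_left₀ hx hx₀ two_ne_zero
  rw [inv_pow, Real.sq_sqrt hK.le, ← one_div, lt_div_iff₀ hK] at h
  exact h.le

section WeakBoundaryCondition

variable {l m n : Type*} [Fintype l] [Fintype m] [Fintype n] [DecidableEq m]
  {Λp : Matrix m m ℝ} {R : Matrix n m ℝ} {H : Matrix l n ℝ}

theorem penalized_boundary_term_ge (hA : (Λp - Rᵀ * (Hᵀ * H) * R).PosDef)
    (Wp : m → ℝ) (Wm : n → ℝ) (v : l → ℝ) :
    -(v ⬝ᵥ v + (Rᵀ * Hᵀ) *ᵥ v ⬝ᵥ (Λp - Rᵀ * (Hᵀ * H) * R)⁻¹ *ᵥ ((Rᵀ * Hᵀ) *ᵥ v)) ≤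
      Wp ⬝ᵥ Λp *ᵥ Wp - Wm ⬝ᵥ (Hᵀ * H) *ᵥ Wm
        + 2 * (Wm ⬝ᵥ (Hᵀ * H) *ᵥ (Wm - R *ᵥ Wp) - H *ᵥ Wm ⬝ᵥ v) := by
  set a := H *ᵥ Wm
  set b := H *ᵥ (R *ᵥ Wp)
  have hRH : Wp ⬝ᵥ (Rᵀ * Hᵀ) *ᵥ v = b ⬝ᵥ v := by
    rw [← mulVec_mulVec, dotProduct_mulVec, vecMul_transpose, dotProduct_mulVec,
      vecMul_transpose]
  have hA_form : Wp ⬝ᵥ (Λp - Rᵀ * (Hᵀ * H) * R) *ᵥ Wp = Wp ⬝ᵥ Λp *ᵥ Wp - b ⬝ᵥ b := by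
    have hgram : Rᵀ * (Hᵀ * H) * R = (H * R)ᵀ * (H * R) := by
      simp only [transpose_mul, Matrix.mul_assoc]
    rw [sub_mulVec, dotProduct_sub, hgram, dotProduct_transpose_mul_mulVec, ← mulVec_mulVec]
  have hpen_form : Wm ⬝ᵥ (Hᵀ * H) *ᵥ (Wm - R *ᵥ Wp) = a ⬝ᵥ a - a ⬝ᵥ b := by
    rw [dotProduct_transpose_mul_mulVec, mulVec_sub, dotProduct_sub]
  have hcross := hA.two_mul_dotProduct_le Wp ((Rᵀ * Hᵀ) *ᵥ v)
  have hdiff := two_mul_dotProduct_le_add (a - b) v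
  rw [hRH, hA_form] at hcross
  simp only [sub_dotProduct, dotProduct_sub] at hdiff
  rw [dotProduct_transpose_mul_mulVec, hpen_form]
  linarith [dotProduct_comm a b]

theorem penalized_boundary_term_ge_of_mulVec {k : Type*} [Fintype k] [DecidableEq k]
    [DecidableEq l] (hA : (Λp - Rᵀ * (Hᵀ * H) * R).PosDef) (T : Matrix l k ℝ)
    (Wp : m → ℝ) (Wm : n → ℝ) (G : k → ℝ) :
    -(‖T‖ ^ 2 * (1 + ‖(Λp - Rᵀ * (Hᵀ * H) * R)⁻¹‖ * ‖Rᵀ * Hᵀ‖ ^ 2) * (G ⬝ᵥ G)) ≤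
      Wp ⬝ᵥ Λp *ᵥ Wp - Wm ⬝ᵥ (Hᵀ * H) *ᵥ Wm
        + 2 * (Wm ⬝ᵥ (Hᵀ * H) *ᵥ (Wm - R *ᵥ Wp) - H *ᵥ Wm ⬝ᵥ T *ᵥ G) := by
  refine le_trans (neg_le_neg ?_) (penalized_boundary_term_ge hA Wp Wm (T *ᵥ G))
  set K := 1 + ‖(Λp - Rᵀ * (Hᵀ * H) * R)⁻¹‖ * ‖Rᵀ * Hᵀ‖ ^ 2
  calc _ ≤ K * (T *ᵥ G ⬝ᵥ T *ᵥ G) := by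
        simp only [K]
        linarith [mulVec_dotProduct_mulVec_mulVec_le (Λp - Rᵀ * (Hᵀ * H) * R)⁻¹ (Rᵀ * Hᵀ)
          (T *ᵥ G)]
    _ ≤ K * (‖T‖ ^ 2 * (G ⬝ᵥ G)) := by
        gcongr
        exact mulVec_dotProduct_mulVec_le T G
    _ = ‖T‖ ^ 2 * K * (G ⬝ᵥ G) := by ring

end WeakBoundaryCondition

theorem weak_inhomogeneous_bc_bound_general {p q : ℕ}
    (Λp : Matrix (Fin p) (Fin p) ℝ) (Λm : Matrix (Fin q) (Fin q) ℝ)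
    (hΛmDiag : Λm.IsDiag) (hΛmNeg : ∀ i, Λm i i < 0)
    (R : Matrix (Fin q) (Fin p) ℝ)
    (Λh : Matrix (Fin q) (Fin q) ℝ)
    (hΛh : Λh = Matrix.diagonal fun i => Real.sqrt (-Λm i i))
    (hPD : (Λp - Rᵀ * (-Λm) * R).PosDef)
    (Pen : Matrix (Fin q) (Fin q) ℝ) (hPen : Pen = -Λm) :
    ∃ δ > (0 : ℝ), ∀ St : Matrix (Fin q) (Fin q) ℝ, IsUnit St.det → ‖St‖ < δ →
      ∀ (S : Matrix (Fin q) (Fin q) ℝ), S = St⁻¹ * Λh →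
        ∀ (Wp : Fin p → ℝ) (Wm : Fin q → ℝ) (G : Fin q → ℝ),
          Wp ⬝ᵥ Λp.mulVec Wp + Wm ⬝ᵥ Λm.mulVec Wm
            + 2 * (Wm ⬝ᵥ Pen.mulVec (Wm - R.mulVec Wp - S⁻¹.mulVec G))
            ≥ -(G ⬝ᵥ G) := by
  have hΛh_symm : Λhᵀ = Λh := by rw [hΛh, diagonal_transpose]
  have hgram : -Λm = Λhᵀ * Λh := by
    rw [hΛh_symm, hΛh]
    exact (hΛmDiag.neg.diagonal_sqrt_mul_self fun i => (neg_pos.2 (hΛmNeg i)).le).symm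
  have hΛh_inv : Λh * Λh⁻¹ = 1 := by
    refine mul_nonsing_inv _ ((isUnit_iff_isUnit_det _).1 ?_)
    exact hΛh ▸ isUnit_diagonal_sqrt fun i => neg_pos.2 (hΛmNeg i)
  rw [hgram] at hPD
  set K := 1 + ‖(Λp - Rᵀ * (Λhᵀ * Λh) * R)⁻¹‖ * ‖Rᵀ * Λhᵀ‖ ^ 2
  have hK : 0 < K := by positivity
  refine ⟨(√K)⁻¹, by positivity, ?_⟩
  rintro St hSt hSt_lt S rfl Wp Wm G
  have hpen : Pen * (St⁻¹ * Λh)⁻¹ = Λhᵀ * St := by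
    rw [hPen, hgram, Matrix.mul_inv_rev, nonsing_inv_nonsing_inv _ hSt, Matrix.mul_assoc,
      ← Matrix.mul_assoc Λh, hΛh_inv, Matrix.one_mul]
  have hform : Wp ⬝ᵥ Λp *ᵥ Wp + Wm ⬝ᵥ Λm *ᵥ Wm
      + 2 * (Wm ⬝ᵥ Pen *ᵥ (Wm - R *ᵥ Wp - (St⁻¹ * Λh)⁻¹ *ᵥ G))
      = Wp ⬝ᵥ Λp *ᵥ Wp - Wm ⬝ᵥ (Λhᵀ * Λh) *ᵥ Wm
        + 2 * (Wm ⬝ᵥ (Λhᵀ * Λh) *ᵥ (Wm - R *ᵥ Wp) - Λh *ᵥ Wm ⬝ᵥ St *ᵥ G) := by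
    rw [mulVec_sub, dotProduct_sub, mulVec_mulVec, hpen, ← mulVec_mulVec,
      dotProduct_mulVec Wm Λhᵀ, vecMul_transpose, hPen, hgram, ← neg_neg Λm, hgram, neg_mulVec,
      dotProduct_neg]
    ring
  have hG : 0 ≤ G ⬝ᵥ G := by simpa using dotProduct_star_self_nonneg G
  have hSt_sq := sq_mul_le_one_of_lt_inv_sqrt hK (norm_nonneg St) hSt_lt
  rw [ge_iff_le, hform]
  exact (neg_le_neg (mul_le_of_le_one_left hG hSt_sq)).trans
    (penalized_boundary_term_ge_of_mulVec hPD St Wp Wm G)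

/-- If `Λ⁺ − Rᵀ|Λ⁻|R` is positive definite and `Σ = |Λ⁻|` (here named `Pen`),
then there exists `δ > 0` such that for every invertible `S̃` with operator norm `‖S̃‖ < δ`,
setting `S = S̃⁻¹|Λ⁻|^{1/2}`, the weakly penalized boundary term is bounded from below
solely by the data: `BT(W⁺, W⁻) + 2(W⁻)ᵀΣ(W⁻ − R W⁺ − S⁻¹G) ≥ −GᵀG`. -/
theorem weak_inhomogeneous_bc_bound {p q : ℕ}
    (Λp : Matrix (Fin p) (Fin p) ℝ) (Λm : Matrix (Fin q) (Fin q) ℝ)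
    (hΛpDiag : Λp.IsDiag) (hΛpNonneg : ∀ i, 0 ≤ Λp i i)
    (hΛmDiag : Λm.IsDiag) (hΛmNeg : ∀ i, Λm i i < 0)
    (R : Matrix (Fin q) (Fin p) ℝ)
    (Λh : Matrix (Fin q) (Fin q) ℝ)
    (hΛh : Λh = Matrix.diagonal fun i => Real.sqrt (-Λm i i))
    (hPD : (Λp - Rᵀ * (-Λm) * R).PosDef)
    (Pen : Matrix (Fin q) (Fin q) ℝ) (hPen : Pen = -Λm) :
    ∃ δ > (0 : ℝ), ∀ St : Matrix (Fin q) (Fin q) ℝ, IsUnit St.det → ‖St‖ < δ →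
      ∀ (S : Matrix (Fin q) (Fin q) ℝ), S = St⁻¹ * Λh →
        ∀ (Wp : Fin p → ℝ) (Wm : Fin q → ℝ) (G : Fin q → ℝ),
          Wp ⬝ᵥ Λp.mulVec Wp + Wm ⬝ᵥ Λm.mulVec Wm
            + 2 * (Wm ⬝ᵥ Pen.mulVec (Wm - R.mulVec Wp - S⁻¹.mulVec G))
            ≥ -(G ⬝ᵥ G) :=
  weak_inhomogeneous_bc_bound_general Λp Λm hΛmDiag hΛmNeg R Λh hΛh hPD Pen hPen
end

section
/- Let n be a natural number, P a constant symmetric n×n real matrix, C : ℝ × ℝ → M_n(ℝ) taking values in skew-symmetric matrices, A : ℝ × ℝ → M_n(ℝ) continuously differentiable, and U : ℝ × ℝ → ℝ^n continuously differentiable. If U satisfies the one-dimensional skew-symmetric system P ∂ₜU + ∂ₓ(AU) + Aᵀ∂ₓU + CU = 0 for all x ∈ [0,1] and all t, then the energy E(t) = ∫₀¹ U(x,t)ᵀ P U(x,t) dx changes only through the boundary terms: E is differentiable in t and E′(t) = 2( U(0,t)ᵀA(0,t)U(0,t) − U(1,t)ᵀA(1,t)U(1,t) ) for all t. -/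
open Matrix intervalIntegral

theorem HasDerivAt.dotProduct' {n : ℕ} {f g : ℝ → Fin n → ℝ} {f' g' : Fin n → ℝ} {s : ℝ}
    (hf : HasDerivAt f f' s) (hg : HasDerivAt g g' s) :
    HasDerivAt (fun τ => f τ ⬝ᵥ g τ) (f' ⬝ᵥ g s + f s ⬝ᵥ g') s := by
  simp only [dotProduct]
  rw [← Finset.sum_add_distrib]
  exact HasDerivAt.fun_sum fun i _ =>
    ((hasDerivAt_pi.mp hf i).mul (hasDerivAt_pi.mp hg i))

/-- For the 1D skew-symmetric system `P ∂ₜU + ∂ₓ(AU) + Aᵀ∂ₓU + CU = 0`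
on the spatial interval `[0,1]` (with `P` symmetric constant, `C` pointwise skew-symmetric,
`A` and `U` continuously differentiable), the energy `E(t) = ∫₀¹ UᵀPU dx` changes only
through the boundary terms:
`E′(t) = 2( U(0,t)ᵀA(0,t)U(0,t) − U(1,t)ᵀA(1,t)U(1,t) )`. -/
theorem energy_rate_boundary_terms {n : ℕ}
    (P : Matrix (Fin n) (Fin n) ℝ) (hP : P.IsSymm)
    (C : ℝ × ℝ → Matrix (Fin n) (Fin n) ℝ)
    (hC : ∀ z, C z + (C z)ᵀ = 0)
    (A : ℝ × ℝ → Matrix (Fin n) (Fin n) ℝ)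
    (hA : ∀ i j, ContDiff ℝ 1 (fun z => A z i j))
    (U : ℝ × ℝ → Fin n → ℝ) (hU : ContDiff ℝ 1 U)
    (hsys : ∀ x ∈ Set.Icc (0 : ℝ) 1, ∀ t : ℝ,
      P.mulVec (fderiv ℝ U (x, t) ((0 : ℝ), (1 : ℝ)))
        + fderiv ℝ (fun w => (A w).mulVec (U w)) (x, t) ((1 : ℝ), (0 : ℝ))
        + (A (x, t))ᵀ.mulVec (fderiv ℝ U (x, t) ((1 : ℝ), (0 : ℝ)))
        + (C (x, t)).mulVec (U (x, t)) = 0) :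
    ∀ t : ℝ,
      HasDerivAt (fun s => ∫ x in (0 : ℝ)..1, U (x, s) ⬝ᵥ P.mulVec (U (x, s)))
        (2 * (U (0, t) ⬝ᵥ (A (0, t)).mulVec (U (0, t))
          - U (1, t) ⬝ᵥ (A (1, t)).mulVec (U (1, t)))) t := by
  intro t
  set V : ℝ × ℝ → Fin n → ℝ := fun w => (A w).mulVec (U w) with hV_def
  have hUi : ∀ i, ContDiff ℝ 1 (fun z => U z i) := fun i => (contDiff_pi.mp hU i)
  have hV : ContDiff ℝ 1 V := by
    rw [contDiff_pi]
    intro i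
    simp only [hV_def, Matrix.mulVec, dotProduct]
    exact ContDiff.sum fun j _ => (hA i j).mul (hUi j)
  have hUd : Differentiable ℝ U := hU.differentiable one_ne_zero
  have hVd : Differentiable ℝ V := hV.differentiable one_ne_zero
  have hUc : Continuous U := hU.continuous
  have hfdU : Continuous (fderiv ℝ U) := hU.continuous_fderiv one_ne_zero
  have hfdV : Continuous (fderiv ℝ V) := hV.continuous_fderiv one_ne_zero
  -- symmetry trick
  have hsymm : ∀ (d u : Fin n → ℝ), d ⬝ᵥ P.mulVec u = u ⬝ᵥ P.mulVec d := by
    intro d u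
    rw [Matrix.dotProduct_mulVec, ← Matrix.mulVec_transpose, hP.eq, dotProduct_comm]
  -- time-derivative of the integrand
  set G : ℝ × ℝ → ℝ := fun z => 2 * (U z ⬝ᵥ P.mulVec (fderiv ℝ U z ((0 : ℝ), (1 : ℝ)))) with hG_def
  have hline_t : ∀ x s : ℝ, HasDerivAt (fun s' => U (x, s')) (fderiv ℝ U (x, s) ((0:ℝ),(1:ℝ))) s := by
    intro x s
    have h1 : HasDerivAt (fun s' : ℝ => ((x, s') : ℝ × ℝ)) ((0:ℝ),(1:ℝ)) s :=
      (hasDerivAt_const s x).prodMk (hasDerivAt_id s)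
    exact (hUd (x, s)).hasFDerivAt.comp_hasDerivAt s h1
  have hline_x : ∀ x s : ℝ, HasDerivAt (fun x' => U (x', s)) (fderiv ℝ U (x, s) ((1:ℝ),(0:ℝ))) x := by
    intro x s
    have h1 : HasDerivAt (fun x' : ℝ => ((x', s) : ℝ × ℝ)) ((1:ℝ),(0:ℝ)) x :=
      (hasDerivAt_id x).prodMk (hasDerivAt_const x s)
    exact (hUd (x, s)).hasFDerivAt.comp_hasDerivAt x h1
  have hlineV_x : ∀ x s : ℝ, HasDerivAt (fun x' => V (x', s)) (fderiv ℝ V (x, s) ((1:ℝ),(0:ℝ))) x := by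
    intro x s
    have h1 : HasDerivAt (fun x' : ℝ => ((x', s) : ℝ × ℝ)) ((1:ℝ),(0:ℝ)) x :=
      (hasDerivAt_id x).prodMk (hasDerivAt_const x s)
    exact (hVd (x, s)).hasFDerivAt.comp_hasDerivAt x h1
  have hmulVecP : ∀ {f : ℝ → Fin n → ℝ} {f' : Fin n → ℝ} {s : ℝ}, HasDerivAt f f' s →
      HasDerivAt (fun τ => P.mulVec (f τ)) (P.mulVec f') s := by
    intro f f' s hf
    exact (Matrix.mulVecLin P).toContinuousLinearMap.hasFDerivAt.comp_hasDerivAt s hf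
  have hg_deriv : ∀ x s : ℝ,
      HasDerivAt (fun s' => U (x, s') ⬝ᵥ P.mulVec (U (x, s'))) (G (x, s)) s := by
    intro x s
    have hu := hline_t x s
    have := hu.dotProduct' (hmulVecP hu)
    have heq : fderiv ℝ U (x,s) ((0:ℝ),(1:ℝ)) ⬝ᵥ P.mulVec (U (x,s))
        + U (x,s) ⬝ᵥ P.mulVec (fderiv ℝ U (x,s) ((0:ℝ),(1:ℝ))) = G (x, s) := by
      rw [hsymm]; simp only [hG_def]; ring
    rw [heq] at this
    exact this
  -- continuity of G
  have hfdU01 : Continuous fun z => fderiv ℝ U z ((0:ℝ),(1:ℝ)) := hfdU.clm_apply continuous_const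
  have hdotcont : ∀ {f g : ℝ × ℝ → Fin n → ℝ}, Continuous f → Continuous g →
      Continuous fun z => f z ⬝ᵥ P.mulVec (g z) := by
    intro f g hf hg
    simp only [dotProduct, Matrix.mulVec]
    exact continuous_finset_sum _ fun i _ => ((continuous_apply i).comp hf).mul
      (continuous_finset_sum _ fun j _ => continuous_const.mul ((continuous_apply j).comp hg))
  have hGcont : Continuous G := continuous_const.mul (hdotcont hUc hfdU01)
  -- bound on compact set
  obtain ⟨M, hM⟩ := (isCompact_Icc.prod (isCompact_closedBall t 1)).exists_bound_of_continuousOn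
    (hGcont.continuousOn (s := Set.Icc (0:ℝ) 1 ×ˢ Metric.closedBall t 1))
  -- x-continuity of the integrand (for integrability)
  have hgcont : Continuous fun z : ℝ × ℝ => U z ⬝ᵥ P.mulVec (U z) := hdotcont hUc hUc
  -- differentiate under the integral
  have key := intervalIntegral.hasDerivAt_integral_of_dominated_loc_of_deriv_le
    (μ := MeasureTheory.volume) (F := fun s x => U (x, s) ⬝ᵥ P.mulVec (U (x, s)))
    (F' := fun s x => G (x, s)) (x₀ := t) (a := (0:ℝ)) (b := 1) (bound := fun _ => M)
    (s := Metric.ball t 1) (Metric.ball_mem_nhds t one_pos)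
    (Filter.Eventually.of_forall fun s =>
      ((hgcont.comp (continuous_id.prodMk continuous_const)).aestronglyMeasurable))
    ((hgcont.comp (continuous_id.prodMk continuous_const)).intervalIntegrable 0 1)
    ((hGcont.comp (continuous_id.prodMk continuous_const)).aestronglyMeasurable)
    (Filter.Eventually.of_forall fun x hx s hs => by
      have hx' : x ∈ Set.Icc (0:ℝ) 1 := by
        rw [Set.uIoc_of_le (by norm_num : (0:ℝ) ≤ 1)] at hx
        exact ⟨le_of_lt hx.1, hx.2⟩
      exact hM (x, s) ⟨hx', Metric.ball_subset_closedBall hs⟩)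
    intervalIntegrable_const
    (Filter.Eventually.of_forall fun x hx s hs => hg_deriv x s)
  -- spatial derivative function
  set H : ℝ × ℝ → ℝ := fun z =>
    fderiv ℝ U z ((1:ℝ),(0:ℝ)) ⬝ᵥ V z + U z ⬝ᵥ fderiv ℝ V z ((1:ℝ),(0:ℝ)) with hH_def
  have hh_deriv : ∀ x : ℝ, HasDerivAt (fun x' => U (x', t) ⬝ᵥ V (x', t)) (H (x, t)) x :=
    fun x => (hline_x x t).dotProduct' (hlineV_x x t)
  -- the key pointwise identity on [0,1]
  have hGH : ∀ x ∈ Set.Icc (0:ℝ) 1, G (x, t) = -2 * H (x, t) := by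
    intro x hx
    have h0 := congrArg (fun v => U (x, t) ⬝ᵥ v) (hsys x hx t)
    simp only [dotProduct_add, dotProduct_zero] at h0
    -- skew term vanishes
    have hCskew : U (x,t) ⬝ᵥ (C (x,t)).mulVec (U (x,t)) = 0 := by
      have h1 : (C (x,t))ᵀ = -C (x,t) := eq_neg_of_add_eq_zero_right (hC (x, t))
      have h2 : U (x,t) ⬝ᵥ (C (x,t)).mulVec (U (x,t))
          = - (U (x,t) ⬝ᵥ (C (x,t)).mulVec (U (x,t))) := by
        conv_lhs => rw [Matrix.dotProduct_mulVec, ← Matrix.mulVec_transpose, h1,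
          Matrix.neg_mulVec, neg_dotProduct, dotProduct_comm]
      linarith
    have hAT : U (x,t) ⬝ᵥ (A (x,t))ᵀ.mulVec (fderiv ℝ U (x,t) ((1:ℝ),(0:ℝ)))
        = fderiv ℝ U (x,t) ((1:ℝ),(0:ℝ)) ⬝ᵥ V (x, t) := by
      rw [Matrix.dotProduct_mulVec, Matrix.vecMul_transpose, dotProduct_comm, dotProduct_comm]
    rw [hCskew, hAT] at h0
    simp only [hG_def, hH_def]
    have hPU : U (x,t) ⬝ᵥ P.mulVec (fderiv ℝ U (x,t) ((0:ℝ),(1:ℝ)))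
        = -(fderiv ℝ U (x,t) ((1:ℝ),(0:ℝ)) ⬝ᵥ V (x, t)
            + U (x,t) ⬝ᵥ fderiv ℝ V (x,t) ((1:ℝ),(0:ℝ))) := by
      linarith [h0]
    rw [hPU]; ring
  -- compute the integral of G(·, t)
  have hHcont : Continuous fun x => H (x, t) := by
    have h1 : Continuous fun z : ℝ × ℝ => fderiv ℝ U z ((1:ℝ),(0:ℝ)) :=
      hfdU.clm_apply continuous_const
    have h2 : Continuous fun z : ℝ × ℝ => fderiv ℝ V z ((1:ℝ),(0:ℝ)) :=
      hfdV.clm_apply continuous_const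
    have hdot : ∀ {f g : ℝ × ℝ → Fin n → ℝ}, Continuous f → Continuous g →
        Continuous fun z => f z ⬝ᵥ g z := by
      intro f g hf hg
      simp only [dotProduct]
      exact continuous_finset_sum _ fun i _ =>
        ((continuous_apply i).comp hf).mul ((continuous_apply i).comp hg)
    exact ((hdot h1 hV.continuous).add (hdot hUc h2)).comp
      (continuous_id.prodMk continuous_const)
  have hint : ∫ x in (0:ℝ)..1, G (x, t) = ∫ x in (0:ℝ)..1, (-2) * H (x, t) := by
    apply intervalIntegral.integral_congr
    intro x hx
    rw [Set.uIcc_of_le (by norm_num : (0:ℝ) ≤ 1)] at hx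
    exact hGH x hx
  have hftc : ∫ x in (0:ℝ)..1, H (x, t)
      = U (1, t) ⬝ᵥ V (1, t) - U (0, t) ⬝ᵥ V (0, t) := by
    exact intervalIntegral.integral_eq_sub_of_hasDerivAt
      (f := fun x => U (x, t) ⬝ᵥ V (x, t)) (fun x _ => hh_deriv x)
      (hHcont.intervalIntegrable 0 1)
  have hval : ∫ x in (0:ℝ)..1, G (x, t)
      = 2 * (U (0, t) ⬝ᵥ (A (0, t)).mulVec (U (0, t))
          - U (1, t) ⬝ᵥ (A (1, t)).mulVec (U (1, t))) := by
    rw [hint, intervalIntegral.integral_const_mul, hftc]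
    simp only [hV_def]; ring
  rw [← hval]
  exact key.2
end

section
/- For the incompressible Euler matrices, for all u, v, p, n₁, n₂ ∈ ℝ with n₁² + n₂² = 1 and with u_n = n₁u + n₂v ≠ 0 and u_τ = −n₂u + n₁v, the boundary quadratic form diagonalizes as Uᵀ(n₁A + n₂B)U = u_n·(u_n + p/u_n)² + u_n·u_τ² − u_n·(p/u_n)², where U = (u, v, p)ᵀ; that is, WᵀΛW with rotated variables W = (u_n + p/u_n, u_τ, p/u_n)ᵀ and Λ = diag(u_n, u_n, −u_n). -/
open Matrix

/-- For the incompressible Euler matrices `A = [[u,0,1],[0,u,0],[1,0,0]]`,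
`B = [[v,0,0],[0,v,1],[0,1,0]]`, with unit normal `(n₁,n₂)`, `u_n = n₁u + n₂v ≠ 0` and
`u_τ = −n₂u + n₁v`, the boundary quadratic form diagonalizes as
`Uᵀ(n₁A + n₂B)U = u_n(u_n + p/u_n)² + u_n u_τ² − u_n (p/u_n)²` for `U = (u,v,p)ᵀ`. -/
theorem incompressible_euler_boundary_diag
    (u v p n₁ n₂ un uτ : ℝ) (hn : n₁ ^ 2 + n₂ ^ 2 = 1)
    (hun : un = n₁ * u + n₂ * v) (huτ : uτ = -n₂ * u + n₁ * v) (hun0 : un ≠ 0) :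
    (![u, v, p]) ⬝ᵥ
        ((n₁ • (!![u, 0, 1; 0, u, 0; 1, 0, 0] : Matrix (Fin 3) (Fin 3) ℝ)
          + n₂ • (!![v, 0, 0; 0, v, 1; 0, 1, 0] : Matrix (Fin 3) (Fin 3) ℝ)).mulVec ![u, v, p])
      = un * (un + p / un) ^ 2 + un * uτ ^ 2 - un * (p / un) ^ 2 := by
  subst hun huτ
  simp [dotProduct, mulVec, Fin.sum_univ_three, Matrix.vecHead, Matrix.vecTail]
  have h' : u * n₁ + n₂ * v ≠ 0 := by rw [mul_comm u n₁]; exact hun0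
  field_simp
  linear_combination (-(n₁*u+n₂*v)^2*(u^2+v^2)) * hn
end

section
/- For the shallow water matrices A(α) and B(β), for every α, β ∈ ℝ, every U = (U₁, U₂, U₃)ᵀ with U₁ > 0, and every n₁, n₂ ∈ ℝ, the boundary quadratic form is independent of the free parameters α and β and equals Uᵀ(n₁A(α) + n₂B(β))U = u_n·U₁² + (1/2)·u_n·(U₂² + U₃²), where u_n = (n₁U₂ + n₂U₃)/√U₁. -/
open Matrix

/-- For the shallow water matrices `A(α)`, `B(β)`, the boundary quadratic form
is independent of the free parameters `α`, `β` and equals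
`Uᵀ(n₁A(α) + n₂B(β))U = u_n U₁² + (1/2)u_n(U₂² + U₃²)` where
`u_n = (n₁U₂ + n₂U₃)/√U₁`, for every `U₁ > 0`. -/
theorem shallow_water_boundary_form (α β U₁ U₂ U₃ n₁ n₂ un : ℝ) (hU₁ : 0 < U₁)
    (hun : un = (n₁ * U₂ + n₂ * U₃) / Real.sqrt U₁) :
    (![U₁, U₂, U₃]) ⬝ᵥ
        ((n₁ • (!![α * U₂ / Real.sqrt U₁, (1 - 3 * α) * Real.sqrt U₁, 0;
                   2 * α * Real.sqrt U₁, (1 / 2) * U₂ / Real.sqrt U₁, 0;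
                   0, 0, (1 / 2) * U₂ / Real.sqrt U₁] : Matrix (Fin 3) (Fin 3) ℝ)
          + n₂ • (!![β * U₃ / Real.sqrt U₁, 0, (1 - 3 * β) * Real.sqrt U₁;
                     0, (1 / 2) * U₃ / Real.sqrt U₁, 0;
                     2 * β * Real.sqrt U₁, 0, (1 / 2) * U₃ / Real.sqrt U₁] :
              Matrix (Fin 3) (Fin 3) ℝ)).mulVec ![U₁, U₂, U₃])
      = un * U₁ ^ 2 + (1 / 2) * un * (U₂ ^ 2 + U₃ ^ 2) := by
  have hs : 0 < Real.sqrt U₁ := Real.sqrt_pos.mpr hU₁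
  have hs2 : Real.sqrt U₁ * Real.sqrt U₁ = U₁ := Real.mul_self_sqrt hU₁.le
  subst hun
  set s := Real.sqrt U₁ with hsdef
  simp only [dotProduct, Matrix.mulVec, Fin.sum_univ_three, Matrix.add_apply,
    Matrix.smul_apply, Matrix.cons_val_zero, Matrix.cons_val_one, Matrix.head_cons,
    Matrix.cons_val_two, Matrix.tail_cons, smul_eq_mul,
    Matrix.cons_val', Matrix.empty_val', Matrix.cons_val_fin_one, Matrix.of_apply, Matrix.vecHead]
  rw [← hs2]
  field_simp
  ring
end

section
/- For the shallow water boundary term in rotated variables: for all U₁ > 0 and all U_n, U_τ ∈ ℝ with U_n ≠ 0, setting u_n = U_n/√U₁ and W = (W₁, W₂, W₃) = (U₁², U₁² + U_n², U_n·U_τ), one has the identity u_n·U₁² + (1/2)·u_n·(U_n² + U_τ²) = (−W₁² + W₂² + W₃²)/(2·U_n·√U₁); i.e., the boundary quadratic form equals Wᵀ·diag(−1/(2U_n√U₁), 1/(2U_n√U₁), 1/(2U_n√U₁))·W, exhibiting only one entry of the sign opposite to u_n. -/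
/-- For the shallow water boundary term in rotated variables: for `U₁ > 0`,
`U_n ≠ 0`, `u_n = U_n/√U₁` and `W = (U₁², U₁² + U_n², U_n U_τ)`, one has
`u_n U₁² + (1/2)u_n(U_n² + U_τ²) = (−W₁² + W₂² + W₃²)/(2 U_n √U₁)`,
i.e. the boundary quadratic form equals
`Wᵀ diag(−1/(2U_n√U₁), 1/(2U_n√U₁), 1/(2U_n√U₁)) W`. -/
theorem shallow_water_rotated_boundary_form (U₁ Un Uτ un W₁ W₂ W₃ : ℝ)
    (hU₁ : 0 < U₁) (hUn : Un ≠ 0) (hun : un = Un / Real.sqrt U₁)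
    (hW₁ : W₁ = U₁ ^ 2) (hW₂ : W₂ = U₁ ^ 2 + Un ^ 2) (hW₃ : W₃ = Un * Uτ) :
    un * U₁ ^ 2 + (1 / 2) * un * (Un ^ 2 + Uτ ^ 2)
      = (-W₁ ^ 2 + W₂ ^ 2 + W₃ ^ 2) / (2 * Un * Real.sqrt U₁) := by
  have hs : Real.sqrt U₁ ≠ 0 := ne_of_gt (Real.sqrt_pos.mpr hU₁)
  subst hun hW₁ hW₂ hW₃
  field_simp
  ring
end

section
/- For the compressible Euler matrices A and B, for every γ ∈ ℝ, every Φ = (φ₁, φ₂, φ₃, φ₄)ᵀ with φ₁ ≠ 0, and every n₁, n₂ ∈ ℝ, setting u_n = (n₁φ₂ + n₂φ₃)/φ₁, the contracted boundary quadratic form equals Φᵀ(n₁A + n₂B)Φ = (1/2)·u_n·( φ₁² + ((γ−1)/2)(φ₂² + φ₃²) + γφ₄² ); in particular, for u_n > 0 all coefficients of the diagonal form are positive whenever 1 < γ < 2, so no outflow boundary conditions are necessary. -/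
open Matrix

/-- For the compressible Euler matrices `A`, `B` (with `u = φ₂/φ₁`,
`v = φ₃/φ₁`), setting `u_n = (n₁φ₂ + n₂φ₃)/φ₁`, the contracted boundary quadratic form is
`Φᵀ(n₁A + n₂B)Φ = (1/2)u_n(φ₁² + ((γ−1)/2)(φ₂² + φ₃²) + γφ₄²)`; in particular, for
`u_n > 0` all coefficients of the diagonal form are positive whenever `1 < γ < 2`, so no
outflow boundary conditions are necessary. -/
theorem compressible_euler_contracted_boundary_form
    (γ φ₁ φ₂ φ₃ φ₄ n₁ n₂ un : ℝ) (hφ₁ : φ₁ ≠ 0)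
    (hun : un = (n₁ * φ₂ + n₂ * φ₃) / φ₁) :
    (![φ₁, φ₂, φ₃, φ₄]) ⬝ᵥ
        ((n₁ • ((1 / 2 : ℝ) •
            (!![φ₂ / φ₁, 0, 0, 0;
                0, ((γ - 1) / 2) * (φ₂ / φ₁), 0, 0;
                0, 0, ((γ - 1) / 2) * (φ₂ / φ₁), 0;
                0, 2 * (γ - 1) * φ₄ / φ₁, 0, (2 - γ) * (φ₂ / φ₁)] :
              Matrix (Fin 4) (Fin 4) ℝ))
          + n₂ • ((1 / 2 : ℝ) •
            (!![φ₃ / φ₁, 0, 0, 0;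
                0, ((γ - 1) / 2) * (φ₃ / φ₁), 0, 0;
                0, 0, ((γ - 1) / 2) * (φ₃ / φ₁), 0;
                0, 0, 2 * (γ - 1) * φ₄ / φ₁, (2 - γ) * (φ₃ / φ₁)] :
              Matrix (Fin 4) (Fin 4) ℝ))).mulVec ![φ₁, φ₂, φ₃, φ₄])
      = (1 / 2) * un * (φ₁ ^ 2 + ((γ - 1) / 2) * (φ₂ ^ 2 + φ₃ ^ 2) + γ * φ₄ ^ 2)
    ∧ (0 < un → 1 < γ → γ < 2 →
        0 < (1 / 2) * un ∧ 0 < (1 / 2) * ((γ - 1) / 2) * un ∧ 0 < (1 / 2) * γ * un) := by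
  subst hun
  constructor
  · simp [dotProduct, mulVec, Matrix.add_apply, Matrix.smul_apply, Fin.sum_univ_four, Matrix.vecHead, Matrix.vecTail]
    field_simp
    ring
  · intro h1 h2 h3
    refine ⟨by linarith, ?_, ?_⟩ <;> nlinarith
end

section
/- Let 1 < γ < 2 and let φ₁ > 0, φ₄ > 0, φ₂ ≠ 0, φ₃ ∈ ℝ. Set u_n = φ₂/φ₁ and M_n² = φ₂²/(γφ₄²) (the squared normal Mach number, since c² = γφ₄²/φ₁²), and define Ψ(M_n) = 1 − 2(γ−1)/(γ(2−γ)M_n²). Then the compressible Euler boundary quadratic form diagonalizes as u_n·( φ₁² + ((γ−1)/2)(φ₂² + φ₃²) + γφ₄² ) = u_n·φ₁² + ((γ−1)/2)·u_n·(φ₂ + 2φ₄²/φ₂)² + ((γ−1)/2)·u_n·φ₃² + (2−γ)·u_n·Ψ(M_n)·φ₄²; i.e., it equals WᵀΛW with W = (φ₁, φ₂ + 2φ₄²/φ₂, φ₃, φ₄)ᵀ and Λ = diag(u_n, ((γ−1)/2)u_n, ((γ−1)/2)u_n, (2−γ)u_n Ψ(M_n)). -/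
/-- For `1 < γ < 2`, `φ₁ > 0`, `φ₄ > 0`, `φ₂ ≠ 0`, with `u_n = φ₂/φ₁`,
`M_n² = φ₂²/(γφ₄²)` and `Ψ = 1 − 2(γ−1)/(γ(2−γ)M_n²)`, the compressible Euler boundary
quadratic form diagonalizes as
`u_n(φ₁² + ((γ−1)/2)(φ₂² + φ₃²) + γφ₄²)
  = u_n φ₁² + ((γ−1)/2)u_n(φ₂ + 2φ₄²/φ₂)² + ((γ−1)/2)u_n φ₃² + (2−γ)u_n Ψ φ₄²`. -/
theorem compressible_euler_boundary_diagonalization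
    (γ φ₁ φ₂ φ₃ φ₄ un Mn2 Ψ : ℝ)
    (hγ₁ : 1 < γ) (hγ₂ : γ < 2) (hφ₁ : 0 < φ₁) (hφ₄ : 0 < φ₄) (hφ₂ : φ₂ ≠ 0)
    (hun : un = φ₂ / φ₁) (hMn2 : Mn2 = φ₂ ^ 2 / (γ * φ₄ ^ 2))
    (hΨ : Ψ = 1 - 2 * (γ - 1) / (γ * (2 - γ) * Mn2)) :
    un * (φ₁ ^ 2 + ((γ - 1) / 2) * (φ₂ ^ 2 + φ₃ ^ 2) + γ * φ₄ ^ 2)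
      = un * φ₁ ^ 2 + ((γ - 1) / 2) * un * (φ₂ + 2 * φ₄ ^ 2 / φ₂) ^ 2
        + ((γ - 1) / 2) * un * φ₃ ^ 2 + (2 - γ) * un * Ψ * φ₄ ^ 2 := by
  have hγ : γ ≠ 0 := by linarith
  have h2γ : (2 : ℝ) - γ ≠ 0 := by linarith
  have hφ₄' : φ₄ ≠ 0 := ne_of_gt hφ₄
  have hφ₁' : φ₁ ≠ 0 := ne_of_gt hφ₁
  subst hun hMn2 hΨ
  field_simp
  ring
end

section
/- Consider subsonic inflow for the compressible Euler equations: let 1 < γ < 2, φ₁ > 0, φ₄ > 0, u_n < 0 with φ₂ = φ₁·u_n (so φ₂ ≠ 0), and set M_n² = φ₂²/(γφ₄²) and Ψ(M_n) = 1 − 2(γ−1)/(γ(2−γ)M_n²). With the Dirichlet choice R = (0, 2φ₄/φ₂, 0)ᵀ, Λ⁺ = (2−γ)·u_n·Ψ(M_n) and |Λ⁻| = diag(|u_n|, ((γ−1)/2)|u_n|, ((γ−1)/2)|u_n|), the scalar quantity Λ⁺ − Rᵀ|Λ⁻|R is strictly negative; hence the condition Λ⁺ − Rᵀ|Λ⁻|R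 ≥ 0 required for boundedness is violated, and Dirichlet inflow conditions on φ₁, φ₂, φ₃ do not yield an energy bound. -/
open Matrix

/-- Subsonic inflow for the compressible Euler equations: for `1 < γ < 2`,
`φ₁ > 0`, `φ₄ > 0`, `u_n < 0`, `φ₂ = φ₁u_n`, `M_n² = φ₂²/(γφ₄²)`,
`Ψ = 1 − 2(γ−1)/(γ(2−γ)M_n²)`, with the Dirichlet choice `R = (0, 2φ₄/φ₂, 0)ᵀ`,
`Λ⁺ = (2−γ)u_nΨ` and `|Λ⁻| = diag(|u_n|, ((γ−1)/2)|u_n|, ((γ−1)/2)|u_n|)`, the scalar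
`Λ⁺ − Rᵀ|Λ⁻|R` is strictly negative; hence the boundedness condition `Λ⁺ − Rᵀ|Λ⁻|R ≥ 0`
is violated and Dirichlet inflow conditions on `φ₁, φ₂, φ₃` give no energy bound. -/
theorem compressible_euler_dirichlet_inflow_unbounded
    (γ φ₁ φ₂ φ₃ φ₄ un Mn2 Ψ : ℝ)
    (hγ₁ : 1 < γ) (hγ₂ : γ < 2) (hφ₁ : 0 < φ₁) (hφ₄ : 0 < φ₄) (hun : un < 0)
    (hφ₂ : φ₂ = φ₁ * un) (hMn2 : Mn2 = φ₂ ^ 2 / (γ * φ₄ ^ 2))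
    (hΨ : Ψ = 1 - 2 * (γ - 1) / (γ * (2 - γ) * Mn2)) :
    (2 - γ) * un * Ψ
      - (![0, 2 * φ₄ / φ₂, 0]) ⬝ᵥ
          ((Matrix.diagonal ![|un|, ((γ - 1) / 2) * |un|, ((γ - 1) / 2) * |un|]).mulVec
            ![0, 2 * φ₄ / φ₂, 0])
      < 0 := by
  have hφ₂ne : φ₂ ≠ 0 := by
    rw [hφ₂]; exact mul_ne_zero hφ₁.ne' hun.ne
  have hγpos : (0:ℝ) < γ := by linarith
  have habs : |un| = -un := abs_of_neg hun
  have hγne : γ ≠ 0 := hγpos.ne'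
  have h2γ : (2:ℝ) - γ ≠ 0 := by linarith
  have hMnne : Mn2 ≠ 0 := by
    rw [hMn2]
    exact div_ne_zero (pow_ne_zero 2 hφ₂ne) (mul_ne_zero hγne (pow_ne_zero 2 hφ₄.ne'))
  have key : (2 - γ) * un * Ψ
      - (![0, 2 * φ₄ / φ₂, 0]) ⬝ᵥ
          ((Matrix.diagonal ![|un|, ((γ - 1) / 2) * |un|, ((γ - 1) / 2) * |un|]).mulVec
            ![0, 2 * φ₄ / φ₂, 0]) = (2 - γ) * un := by
    simp [Matrix.mulVec_diagonal, dotProduct, Fin.sum_univ_three, habs, hΨ, hMn2]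
    field_simp
    ring
  rw [key]
  have := mul_pos (by linarith : (0:ℝ) < 2 - γ) (neg_pos.mpr hun)
  nlinarith
end

section
/- Semi-discrete energy conservation for summation-by-parts schemes: let M be a natural number, P_Ω an M×M real diagonal matrix with positive diagonal entries, Q an M×M real matrix with Q + Qᵀ = B, A : ℝ → M_M(ℝ) a function taking values in diagonal matrices, and u : ℝ → ℝ^M a differentiable function satisfying the semi-discrete scheme P_Ω u′(t) + Q(A(t)u(t)) + A(t)(Q u(t)) = 0 for all t. Then the discrete energy u(t)ᵀP_Ω u(t) changes only through the boundary matrix B: d/dt ( u(t)ᵀ P_Ω u(t) ) = −2·u(t)ᵀ B (A(t) u(t)) for all t. -/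
open Matrix

lemma dot_symm_swap {M : ℕ} (C : Matrix (Fin M) (Fin M) ℝ) (x y : Fin M → ℝ) :
    x ⬝ᵥ C.mulVec y = y ⬝ᵥ Cᵀ.mulVec x := by
  rw [Matrix.dotProduct_mulVec, ← Matrix.vecMul_transpose, dotProduct_comm,
    Matrix.transpose_transpose]

/-- Semi-discrete energy conservation for summation-by-parts schemes: if
`P_Ω` is diagonal positive, `Q + Qᵀ = B`, `A(t)` is diagonal, and `u` satisfies
`P_Ω u′ + Q(Au) + A(Qu) = 0`, then the discrete energy changes only through the boundary
matrix `B`: `d/dt(uᵀP_Ωu) = −2 uᵀB(Au)`. -/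
theorem sbp_semidiscrete_energy_rate {M : ℕ}
    (PΩ : Matrix (Fin M) (Fin M) ℝ) (hPΩDiag : PΩ.IsDiag) (hPΩPos : ∀ i, 0 < PΩ i i)
    (Q B : Matrix (Fin M) (Fin M) ℝ) (hSBP : Q + Qᵀ = B)
    (A : ℝ → Matrix (Fin M) (Fin M) ℝ) (hADiag : ∀ t, (A t).IsDiag)
    (u : ℝ → Fin M → ℝ) (hu : Differentiable ℝ u)
    (hscheme : ∀ t, PΩ.mulVec (deriv u t) + Q.mulVec ((A t).mulVec (u t))
      + (A t).mulVec (Q.mulVec (u t)) = 0) :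
    ∀ t, HasDerivAt (fun s => u s ⬝ᵥ PΩ.mulVec (u s))
      (-2 * (u t ⬝ᵥ B.mulVec ((A t).mulVec (u t)))) t := by
  intro t
  set u' := deriv u t with hu'def
  have hcomp : ∀ i, HasDerivAt (fun s => u s i) (u' i) t :=
    hasDerivAt_pi.1 (hu t).hasDerivAt
  -- derivative of the energy as a bilinear expression
  have hD : HasDerivAt (fun s => u s ⬝ᵥ PΩ.mulVec (u s))
      (u' ⬝ᵥ PΩ.mulVec (u t) + u t ⬝ᵥ PΩ.mulVec u') t := by
    have : HasDerivAt (fun s => ∑ i, u s i * ∑ j, PΩ i j * u s j)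
        (∑ i, (u' i * ∑ j, PΩ i j * u t j + u t i * ∑ j, PΩ i j * u' j)) t := by
      refine HasDerivAt.fun_sum fun i _ => ?_
      exact (hcomp i).mul (HasDerivAt.fun_sum fun j _ => (hcomp j).const_mul _)
    simpa [dotProduct, Matrix.mulVec, Finset.sum_add_distrib,
      Finset.mul_sum] using this
  -- symmetry of PΩ
  have hPsymm : PΩᵀ = PΩ := hPΩDiag.isSymm
  have hAsymm : (A t)ᵀ = A t := (hADiag t).isSymm
  have h1 : u' ⬝ᵥ PΩ.mulVec (u t) = u t ⬝ᵥ PΩ.mulVec u' := by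
    rw [dot_symm_swap, hPsymm]
  have hs : PΩ.mulVec u' = -(Q.mulVec ((A t).mulVec (u t)) + (A t).mulVec (Q.mulVec (u t))) := by
    have := hscheme t
    rw [← hu'def] at this
    linear_combination (norm := module) this
  have key : u' ⬝ᵥ PΩ.mulVec (u t) + u t ⬝ᵥ PΩ.mulVec u'
      = -2 * (u t ⬝ᵥ B.mulVec ((A t).mulVec (u t))) := by
    rw [h1, hs]
    have h2 : u t ⬝ᵥ (A t).mulVec (Q.mulVec (u t))
        = u t ⬝ᵥ Qᵀ.mulVec ((A t).mulVec (u t)) := by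
      rw [dot_symm_swap (A t) (u t), hAsymm, dot_symm_swap Qᵀ (u t),
        Matrix.transpose_transpose, dotProduct_comm]
    have hB : u t ⬝ᵥ B.mulVec ((A t).mulVec (u t))
        = u t ⬝ᵥ Q.mulVec ((A t).mulVec (u t)) + u t ⬝ᵥ Qᵀ.mulVec ((A t).mulVec (u t)) := by
      rw [← hSBP, Matrix.add_mulVec, dotProduct_add]
    rw [dotProduct_neg, dotProduct_add, h2, hB]
    ring
  rw [← key]
  exact hD
end
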